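/- arXiv:1506.05746 — 7 statements merged into one kernel-verified Lean document; each statement's English description precedes it below -/
import Mathlib

section
/- If θ = p/q with p, q coprime positive integers, p even (hence q odd), and 0 < α ≤ 1, then the series ∑_{n=1}^∞ cos^n(π p n / q) / n^α diverges to +∞. -/
/-!
Along the multiples `n = q m` the angle `π p n / q` is a multiple of `2π` (as `p` is even), so
those terms are exactly `1 / n ^ α`, and they alone already form a divergent series since
`α ≤ 1`. For `q ∤ n` coprimality gives `q ∤ p n`, so `π p n / q` stays at distance at least
`π / q` from `π ℤ` and `|cos (π p n / q)| ^ n ≤ cos (π / q) ^ n` decays geometrically; these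
terms form an absolutely convergent series and cannot stop the divergence.
-/

open Real Filter Finset

lemma Finset.tendsto_sum_Icc_one_atTop {f : ℕ → ℝ}
    (hf : Tendsto (fun N => ∑ n ∈ range N, f n) atTop atTop) :
    Tendsto (fun N => ∑ n ∈ Icc 1 N, f n) atTop atTop := by
  have hIcc : ∀ N, ∑ n ∈ Icc 1 N, f n = ∑ n ∈ range (N + 1), f n - f 0 := fun N => by
    rw [← Ico_add_one_right_eq_Icc, sum_Ico_eq_sub f (by omega), sum_range_one]
  simp only [hIcc]
  exact tendsto_atTop_add_const_right _ _ (hf.comp (tendsto_add_atTop_nat 1))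

lemma tendsto_sum_range_atTop_of_summable_sub {f b : ℕ → ℝ} (hb0 : ∀ n, 0 ≤ b n)
    (hb : ¬Summable b) (hfb : Summable fun n => f n - b n) :
    Tendsto (fun N => ∑ n ∈ range N, f n) atTop atTop := by
  have hsplit : ∀ N,
      ∑ n ∈ range N, f n = ∑ n ∈ range N, b n + ∑ n ∈ range N, (f n - b n) := fun N => by
    rw [← sum_add_distrib]; simp
  simp only [hsplit]
  exact ((not_summable_iff_tendsto_nat_atTop_of_nonneg hb0).mp hb).atTop_add
    hfb.hasSum.tendsto_sum_nat

lemma not_summable_ite_dvd_one_div_rpow {q : ℕ} (hq : 0 < q) {α : ℝ} (hα : α ≤ 1) :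
    ¬Summable fun n : ℕ => if q ∣ n then 1 / (n : ℝ) ^ α else 0 := by
  intro h
  have hqα : (q : ℝ) ^ α ≠ 0 := (rpow_pos_of_pos (by exact_mod_cast hq) α).ne'
  have hmul : Summable fun m : ℕ => ((q : ℝ) ^ α)⁻¹ * (1 / (m : ℝ) ^ α) :=
    (h.comp_injective (mul_right_injective₀ hq.ne')).congr fun m => by simp [mul_rpow, mul_comm]
  rw [summable_mul_left_iff (inv_ne_zero hqα), summable_one_div_nat_rpow] at hmul
  linarith

lemma cos_le_cos_pi_div {r q : ℝ} (hr : 1 ≤ r) (hrq : r ≤ q) :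
    cos (π * r / q) ≤ cos (π / q) := by
  have hq : 0 < q := by linarith
  apply cos_le_cos_of_nonneg_of_le_pi (by positivity)
  · rw [div_le_iff₀ hq]; nlinarith [pi_pos]
  · exact div_le_div_of_nonneg_right (by nlinarith [pi_pos]) hq.le

lemma abs_cos_pi_mul_div_le {k q : ℕ} (hk : ¬q ∣ k) : |cos (π * k / q)| ≤ cos (π / q) := by
  rcases Nat.eq_zero_or_pos q with rfl | hq
  · simp
  have hr : 0 < k % q := Nat.pos_of_ne_zero fun h => hk (Nat.dvd_of_mod_eq_zero h)
  have hrq : k % q < q := Nat.mod_lt _ hq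
  have hangle : π * k / q = π * (k % q : ℕ) / q + (k / q : ℕ) * π := by
    have hk' : (k : ℝ) = q * (k / q : ℕ) + (k % q : ℕ) := by
      exact_mod_cast (Nat.div_add_mod k q).symm
    rw [hk']; field_simp; ring
  rw [hangle, cos_add_nat_mul_pi, abs_mul, abs_pow, abs_neg, abs_one, one_pow, one_mul, abs_le]
  have hsub : cos (π * (q - k % q : ℕ) / q) ≤ cos (π / q) :=
    cos_le_cos_pi_div (by exact_mod_cast Nat.sub_pos_of_lt hrq) (by exact_mod_cast Nat.sub_le _ _)
  rw [Nat.cast_sub hrq.le, mul_sub, sub_div, mul_div_cancel_right₀ _ (by positivity),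
    cos_pi_sub] at hsub
  exact ⟨by linarith, cos_le_cos_pi_div (by exact_mod_cast hr) (by exact_mod_cast hrq.le)⟩

lemma cos_pi_mul_div_eq_one {p q n : ℕ} (hp : Even p) (hq : q ≠ 0) (hn : q ∣ n) :
    cos (π * p * n / q) = 1 := by
  obtain ⟨s, rfl⟩ := hp
  obtain ⟨k, rfl⟩ := hn
  have hangle : π * (s + s : ℕ) * (q * k : ℕ) / q = (s * k : ℕ) * (2 * π) := by
    push_cast; field_simp; ring
  rw [hangle, cos_nat_mul_two_pi]

lemma summable_cos_pow_div_rpow_sub_ite_dvd {p q : ℕ} (hq : 0 < q) (hco : p.Coprime q)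
    (hpe : Even p) {α : ℝ} (hα : 0 ≤ α) :
    Summable fun n : ℕ =>
      cos (π * p * n / q) ^ n / (n : ℝ) ^ α - if q ∣ n then 1 / (n : ℝ) ^ α else 0 := by
  set c := max (cos (π / q)) 0
  have hc1 : c < 1 := by
    refine max_lt ?_ one_pos
    rw [← cos_zero]
    apply cos_lt_cos_of_nonneg_of_le_pi le_rfl
      (div_le_self pi_pos.le (by exact_mod_cast hq)) (by positivity)
  refine (summable_geometric_of_lt_one (le_max_right _ _) hc1).of_norm_bounded fun n => ?_
  by_cases hn : q ∣ n
  · simp [hn, cos_pi_mul_div_eq_one hpe hq.ne' hn]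
  · have hpn : ¬q ∣ p * n := fun h => hn (hco.symm.dvd_of_dvd_mul_left h)
    have hn1 : (1 : ℝ) ≤ n := by
      exact_mod_cast Nat.one_le_iff_ne_zero.mpr (by rintro rfl; simp at hn)
    have hcos : |cos (π * p * n / q)| ≤ c := by
      have := abs_cos_pi_mul_div_le hpn
      push_cast at this
      rw [← mul_assoc] at this
      exact this.trans (le_max_left _ _)
    rw [if_neg hn, sub_zero, Real.norm_eq_abs, abs_div, abs_pow,
      abs_of_pos (rpow_pos_of_pos (by linarith) α)]
    calc |cos (π * p * n / q)| ^ n / (n : ℝ) ^ α ≤ |cos (π * p * n / q)| ^ n :=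
          div_le_self (by positivity) (one_le_rpow hn1 hα)
      _ ≤ c ^ n := pow_le_pow_left₀ (abs_nonneg _) hcos n

theorem stmt0_general (p q : ℕ) (hq : 0 < q) (hco : Nat.Coprime p q)
    (hpe : Even p) (α : ℝ) (hα0 : 0 < α) (hα1 : α ≤ 1) :
    Tendsto (fun N : ℕ => ∑ n ∈ Finset.Icc 1 N,
      Real.cos (Real.pi * p * n / q) ^ n / (n : ℝ) ^ α) atTop atTop :=
  Finset.tendsto_sum_Icc_one_atTop <| tendsto_sum_range_atTop_of_summable_sub
    (fun n => by split_ifs <;> positivity) (not_summable_ite_dvd_one_div_rpow hq hα1)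
    (summable_cos_pow_div_rpow_sub_ite_dvd hq hco hpe hα0.le)

/-- If θ = p/q with p, q coprime positive integers, p even (hence q odd), and
0 < α ≤ 1, then ∑ cosⁿ(π p n / q) / n^α diverges to +∞. -/
theorem stmt0 (p q : ℕ) (hp : 0 < p) (hq : 0 < q) (hco : Nat.Coprime p q)
    (hpe : Even p) (α : ℝ) (hα0 : 0 < α) (hα1 : α ≤ 1) :
    Tendsto (fun N : ℕ => ∑ n ∈ Finset.Icc 1 N,
      Real.cos (Real.pi * p * n / q) ^ n / (n : ℝ) ^ α) atTop atTop :=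
  stmt0_general p q hq hco hpe α hα0 hα1
end

section
/- If θ = p/q with p, q coprime positive integers, both p and q odd, and 0 < α ≤ 1, then the series ∑_{n=1}^∞ cos^n(π p n / q) / n^α converges but does not converge absolutely. -/
/-!
Along the multiples `n = q k` the angle `π p k` is a multiple of `π`, so the term equals
`(-1)^(p k · q k) / (q k)^α = (-1)^k / (q k)^α` because `p` and `q` are odd: these terms form an
alternating `α`-series, convergent for `α > 0` and not absolutely convergent for `α ≤ 1`.
For every other `n`, coprimality puts `p n / q` at distance at least `1 / q` from the integers,
so `|cos (π p n / q)| ≤ cos (π / q) < 1` and those terms are dominated by a convergent geometric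
series.
-/

open Real Filter Finset Topology

noncomputable def cosPowTerm (p q : ℕ) (α : ℝ) (n : ℕ) : ℝ :=
  cos (π * p * n / q) ^ n / (n : ℝ) ^ α

section Sums

variable {M : Type*} [AddCommMonoid M]

lemma sum_Icc_one_eq_sum_range_succ {f : ℕ → M} (h0 : f 0 = 0) (N : ℕ) :
    ∑ n ∈ Icc 1 N, f n = ∑ n ∈ range (N + 1), f n := by
  have : range (N + 1) = insert 0 (Icc 1 N) := by
    ext n; simp only [mem_range, mem_insert, mem_Icc]; omega
  rw [this, sum_insert (by simp), h0, zero_add]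

lemma range_succ_filter_dvd_eq_image {q : ℕ} (hq : 0 < q) (N : ℕ) :
    {n ∈ range (N + 1) | q ∣ n} = (range (N / q + 1)).image (q * ·) := by
  ext n
  simp only [mem_filter, mem_range, mem_image, Nat.lt_succ_iff]
  constructor
  · rintro ⟨hn, k, rfl⟩
    exact ⟨k, (Nat.le_div_iff_mul_le hq).2 (by rwa [mul_comm]), rfl⟩
  · rintro ⟨k, hk, rfl⟩
    exact ⟨by rw [mul_comm]; exact (Nat.le_div_iff_mul_le hq).1 hk, dvd_mul_right q k⟩

variable [TopologicalSpace M]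

lemma tendsto_sum_range_ite_dvd {q : ℕ} (hq : 0 < q) {a : ℕ → M} {l : M}
    (h : Tendsto (fun K => ∑ k ∈ range K, a (q * k)) atTop (𝓝 l)) :
    Tendsto (fun N => ∑ n ∈ range N, if q ∣ n then a n else 0) atTop (𝓝 l) := by
  have hdiv : Tendsto (fun N => N / q + 1) atTop atTop :=
    (tendsto_add_atTop_nat 1).comp (Nat.tendsto_div_const_atTop hq.ne')
  refine (tendsto_add_atTop_iff_nat 1).1 ((h.comp hdiv).congr fun N => ?_)
  rw [← sum_filter, range_succ_filter_dvd_eq_image hq,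
    sum_image fun x _ y _ hxy => Nat.eq_of_mul_eq_mul_left hq hxy]
  rfl

end Sums

lemma exists_tendsto_sum_range_neg_one_pow_div_rpow {α : ℝ} (hα : 0 < α) :
    ∃ l, Tendsto (fun K => ∑ k ∈ range K, (-1 : ℝ) ^ k / (k : ℝ) ^ α) atTop (𝓝 l) := by
  have hanti : Antitone fun k : ℕ => ((k + 1 : ℝ) ^ α)⁻¹ := fun i j hij =>
    inv_anti₀ (by positivity) (rpow_le_rpow (by positivity) (by gcongr) hα.le)
  have hzero : Tendsto (fun k : ℕ => ((k + 1 : ℝ) ^ α)⁻¹) atTop (𝓝 0) :=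
    tendsto_inv_atTop_zero.comp <| (tendsto_rpow_atTop hα).comp <|
      tendsto_atTop_add_const_right _ 1 tendsto_natCast_atTop_atTop
  obtain ⟨l, hl⟩ := hanti.tendsto_alternating_series_of_tendsto_zero hzero
  refine ⟨-l, (tendsto_add_atTop_iff_nat 1).1 (hl.neg.congr fun K => ?_)⟩
  simp [sum_range_succ', zero_rpow hα.ne', pow_succ, div_eq_mul_inv]

lemma abs_cos_le_cos_of_le_of_le_pi_sub {x y : ℝ} (hy : 0 ≤ y) (hyx : y ≤ x) (hxy : x ≤ π - y) :
    |cos x| ≤ cos y := by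
  refine abs_le.2 ⟨?_, cos_le_cos_of_nonneg_of_le_pi hy (by linarith) hyx⟩
  have := cos_le_cos_of_nonneg_of_le_pi hy (by linarith) (by linarith : y ≤ π - x)
  rw [cos_pi_sub] at this
  linarith

lemma abs_cos_pi_mul_div_le_cos_pi_div {m q : ℕ} (hm : ¬ q ∣ m) :
    |cos (π * m / q)| ≤ cos (π / q) := by
  rcases Nat.eq_zero_or_pos q with rfl | hq
  · simp
  have hr0 : 0 < m % q := Nat.pos_of_ne_zero fun h => hm (Nat.dvd_of_mod_eq_zero h)
  have hrq : m % q + 1 ≤ q := Nat.mod_lt m hq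
  have hangle : π * m / q = π / q * (m % q : ℕ) + (m / q : ℕ) * π := by
    have hq' : (q : ℝ) ≠ 0 := by positivity
    have hm : (m : ℝ) = (m % q : ℕ) + q * (m / q : ℕ) := by
      exact_mod_cast (Nat.mod_add_div m q).symm
    rw [hm]
    field_simp
  rw [hangle, cos_add_nat_mul_pi, abs_mul, abs_pow, abs_neg, abs_one, one_pow, one_mul]
  have hπq : 0 < π / q := by positivity
  refine abs_cos_le_cos_of_le_of_le_pi_sub hπq.le ?_ ?_
  · exact le_mul_of_one_le_right hπq.le (by exact_mod_cast hr0)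
  · have : π / q * ((m % q : ℕ) + 1) ≤ π / q * q := by gcongr; exact_mod_cast hrq
    rw [div_mul_cancel₀ _ (by positivity)] at this
    linarith

lemma cos_pi_div_lt_one {q : ℕ} (hq : 0 < q) : cos (π / q) < 1 := by
  have h := cos_lt_cos_of_nonneg_of_le_pi le_rfl (div_le_self pi_pos.le (by exact_mod_cast hq))
    (by positivity : 0 < π / q)
  rwa [cos_zero] at h

lemma cosPowTerm_zero (p q : ℕ) {α : ℝ} (hα : α ≠ 0) : cosPowTerm p q α 0 = 0 := by
  simp [cosPowTerm, zero_rpow hα]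

lemma cosPowTerm_mul_self {p q : ℕ} (hpo : Odd p) (hqo : Odd q) (α : ℝ) (k : ℕ) :
    cosPowTerm p q α (q * k) = (-1) ^ k / (k : ℝ) ^ α / (q : ℝ) ^ α := by
  have hq : (q : ℝ) ≠ 0 := by exact_mod_cast hqo.pos.ne'
  have hangle : π * p * ((q * k : ℕ) : ℝ) / q = (p * k : ℕ) * π := by
    push_cast
    field_simp
  have hsign : ((-1 : ℝ) ^ (p * k)) ^ (q * k) = (-1) ^ k := by
    rw [← pow_mul]
    rcases Nat.even_or_odd k with hk | hk
    · rw [((hk.mul_left p).mul_right _).neg_one_pow, hk.neg_one_pow]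
    · rw [((hpo.mul hk).mul (hqo.mul hk)).neg_one_pow, hk.neg_one_pow]
  rw [cosPowTerm, hangle, cos_nat_mul_pi, hsign, Nat.cast_mul,
    mul_rpow (Nat.cast_nonneg q) (Nat.cast_nonneg k), mul_comm, div_div]

lemma abs_cosPowTerm_le_of_not_dvd {p q : ℕ} (hco : p.Coprime q) {α : ℝ} (hα : 0 ≤ α) {n : ℕ}
    (hn : ¬ q ∣ n) : |cosPowTerm p q α n| ≤ cos (π / q) ^ n := by
  have hpn : ¬ q ∣ p * n := fun h => hn (hco.symm.dvd_of_dvd_mul_left h)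
  have hn1 : (1 : ℝ) ≤ n := by
    exact_mod_cast Nat.one_le_iff_ne_zero.2 (by rintro rfl; exact hn (dvd_zero q))
  rw [cosPowTerm, abs_div, abs_pow, abs_of_nonneg (by positivity : (0 : ℝ) ≤ (n : ℝ) ^ α)]
  calc |cos (π * p * n / q)| ^ n / (n : ℝ) ^ α ≤ |cos (π * p * n / q)| ^ n :=
        div_le_self (by positivity) (one_le_rpow hn1 hα)
    _ ≤ cos (π / q) ^ n := by
        gcongr
        simpa [mul_assoc] using abs_cos_pi_mul_div_le_cos_pi_div hpn

lemma summable_ite_dvd_cosPowTerm {p q : ℕ} (hq : 0 < q) (hco : p.Coprime q) {α : ℝ}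
    (hα : 0 ≤ α) :
    Summable fun n => if q ∣ n then 0 else cosPowTerm p q α n := by
  obtain rfl | hq2 : q = 1 ∨ 2 ≤ q := by omega
  · simp [summable_zero]
  have hr0 : 0 ≤ cos (π / q) := cos_nonneg_of_neg_pi_div_two_le_of_le
    (by linarith [pi_pos, (by positivity : 0 ≤ π / q)])
    (div_le_div_of_nonneg_left pi_pos.le two_pos (by exact_mod_cast hq2))
  refine Summable.of_norm_bounded (summable_geometric_of_lt_one hr0 (cos_pi_div_lt_one hq))
    fun n => ?_
  split_ifs with hn
  · simpa using pow_nonneg hr0 n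
  · exact abs_cosPowTerm_le_of_not_dvd hco hα hn

lemma exists_tendsto_sum_range_cosPowTerm {p q : ℕ} (hco : p.Coprime q) (hpo : Odd p)
    (hqo : Odd q) {α : ℝ} (hα : 0 < α) :
    ∃ l, Tendsto (fun N => ∑ n ∈ range N, cosPowTerm p q α n) atTop (𝓝 l) := by
  obtain ⟨l, hl⟩ := exists_tendsto_sum_range_neg_one_pow_div_rpow hα
  have hmul : Tendsto (fun N => ∑ n ∈ range N, if q ∣ n then cosPowTerm p q α n else 0) atTop
      (𝓝 (l / (q : ℝ) ^ α)) := by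
    refine tendsto_sum_range_ite_dvd hqo.pos ?_
    simp_rw [cosPowTerm_mul_self hpo hqo, ← sum_div]
    exact hl.div_const _
  have hrest := (summable_ite_dvd_cosPowTerm hqo.pos hco hα.le).hasSum.tendsto_sum_nat
  refine ⟨_, (hmul.add hrest).congr fun N => ?_⟩
  rw [← sum_add_distrib]
  exact sum_congr rfl fun n _ => by split_ifs <;> simp

lemma not_summable_abs_cosPowTerm {p q : ℕ} (hpo : Odd p) (hqo : Odd q) {α : ℝ} (hα : α ≤ 1) :
    ¬ Summable fun n => |cosPowTerm p q α n| := by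
  intro h
  have hq : (q : ℝ) ^ α ≠ 0 := by have := hqo.pos; positivity
  have hmul := h.comp_injective (mul_right_injective₀ hqo.pos.ne' : Function.Injective (q * ·))
  have hpser : Summable fun k : ℕ => ((k : ℝ) ^ α)⁻¹ := by
    refine (hmul.mul_left ((q : ℝ) ^ α)).congr fun k => ?_
    simp only [Function.comp_apply, cosPowTerm_mul_self hpo hqo, abs_div, abs_pow, abs_neg,
      abs_one, one_pow, abs_of_nonneg (Real.rpow_nonneg (Nat.cast_nonneg _) α)]
    field_simp
  exact absurd (Real.summable_nat_rpow_inv.1 hpser) (not_lt.2 hα)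

theorem stmt1_general (p q : ℕ) (hco : Nat.Coprime p q)
    (hpo : Odd p) (hqo : Odd q) (α : ℝ) (hα0 : 0 < α) (hα1 : α ≤ 1) :
    (∃ l : ℝ, Tendsto (fun N : ℕ => ∑ n ∈ Finset.Icc 1 N,
        Real.cos (Real.pi * p * n / q) ^ n / (n : ℝ) ^ α) atTop (nhds l)) ∧
    ¬ Summable (fun n : ℕ => |Real.cos (Real.pi * p * n / q) ^ n / (n : ℝ) ^ α|) := by
  refine ⟨?_, not_summable_abs_cosPowTerm hpo hqo hα1⟩
  obtain ⟨l, hl⟩ := exists_tendsto_sum_range_cosPowTerm hco hpo hqo hα0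
  refine ⟨l, ((tendsto_add_atTop_iff_nat 1).2 hl).congr fun N => ?_⟩
  exact (sum_Icc_one_eq_sum_range_succ (cosPowTerm_zero p q hα0.ne') N).symm

/-- If θ = p/q with p, q coprime positive integers, both odd, and 0 < α ≤ 1,
then ∑ cosⁿ(π p n / q) / n^α converges but not absolutely. -/
theorem stmt1 (p q : ℕ) (hp : 0 < p) (hq : 0 < q) (hco : Nat.Coprime p q)
    (hpo : Odd p) (hqo : Odd q) (α : ℝ) (hα0 : 0 < α) (hα1 : α ≤ 1) :
    (∃ l : ℝ, Tendsto (fun N : ℕ => ∑ n ∈ Finset.Icc 1 N,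
        Real.cos (Real.pi * p * n / q) ^ n / (n : ℝ) ^ α) atTop (nhds l)) ∧
    ¬ Summable (fun n : ℕ => |Real.cos (Real.pi * p * n / q) ^ n / (n : ℝ) ^ α|) :=
  stmt1_general p q hco hpo hqo α hα0 hα1
end

section
/- If θ = p/q with p, q coprime positive integers, q ≡ 2 (mod 4), and 0 < α ≤ 1, then the series ∑_{n=1}^∞ sin^n(π p n / q) / n^α converges conditionally (converges but not absolutely). -/
/-!
Write `q = 2 q₁` with `q₁` odd; then `p` is odd. The base `sin (π p n / q)` has modulus `1`
exactly on the progression `n = q₁ (2j + 1)`, where the term equals `± (-1)ʲ / nᵅ`: an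
alternating series, convergent, but whose absolute values are comparable to `∑ 1 / jᵅ`,
divergent since `α ≤ 1`. Off the progression `|sin (π p n / q)|` is `q`-periodic in `n` and below `1`, hence
bounded by some `c < 1`, and those terms are dominated by the geometric series `cⁿ`.
-/

open Real Filter Finset Topology

theorem Finset.eq_range_card_of_isLowerSet {s : Finset ℕ} (hs : IsLowerSet (s : Set ℕ)) :
    s = range #s := by
  ext j
  rw [mem_range]
  constructor
  · intro hj
    have : range (j + 1) ⊆ s := fun i hi => hs (Nat.lt_succ_iff.1 (mem_range.1 hi)) hj
    simpa using card_le_card this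
  · intro hj
    by_contra hjs
    have : s ⊆ range j := fun i hi => mem_range.2 (lt_of_not_ge fun hji => hjs (hs hji hi))
    have := card_le_card this
    rw [card_range] at this
    omega

theorem StrictMono.tendsto_sum_range_indicator_range {M : Type*} [AddCommMonoid M]
    [TopologicalSpace M] {e : ℕ → ℕ} (he : StrictMono e) {f : ℕ → M} {L : M}
    (hf : Tendsto (fun N => ∑ j ∈ range N, f (e j)) atTop (𝓝 L)) :
    Tendsto (fun N => ∑ n ∈ range N, (Set.range e).indicator f n) atTop (𝓝 L) := by
  classical
  -- `{j | e j < N}` is an initial segment, so these partial sums are partial sums of `f ∘ e`.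
  set S : ℕ → Finset ℕ := fun N => {j ∈ range N | e j < N}
  have hS : ∀ N, S N = range #(S N) := fun N => eq_range_card_of_isLowerSet
    fun i j hij hj => by
      simp only [S, coe_filter, mem_range, Set.mem_ofPred_eq] at hj ⊢
      exact ⟨hij.trans_lt hj.1, (he.monotone hij).trans_lt hj.2⟩
  have hsum : ∀ N,
      ∑ n ∈ range N, (Set.range e).indicator f n = ∑ j ∈ range #(S N), f (e j) := by
    intro N
    rw [← hS, sum_indicator_eq_sum_filter, ← sum_image he.injective.injOn]
    congr 1
    ext n
    simp only [S, mem_filter, mem_range, mem_image, Set.mem_range]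
    constructor
    · rintro ⟨hn, j, rfl⟩
      exact ⟨j, ⟨he.le_apply.trans_lt hn, hn⟩, rfl⟩
    · rintro ⟨j, ⟨-, hj⟩, rfl⟩
      exact ⟨hj, j, rfl⟩
  have hcard : Tendsto (fun N => #(S N)) atTop atTop := by
    refine tendsto_atTop_atTop.2 fun K => ⟨e K + 1, fun N hN => ?_⟩
    have hKN : e K < N := by omega
    have hK : K ∈ S N := mem_filter.2 ⟨mem_range.2 (he.le_apply.trans_lt hKN), hKN⟩
    rw [hS N] at hK
    exact (mem_range.1 hK).le
  exact (hf.comp hcard).congr fun N => (hsum N).symm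

theorem StrictMono.tendsto_sum_range_of_summable_indicator_compl {M : Type*} [AddCommMonoid M]
    [TopologicalSpace M] [ContinuousAdd M] {e : ℕ → ℕ} (he : StrictMono e) {f : ℕ → M} {L : M}
    (hfe : Tendsto (fun N => ∑ j ∈ range N, f (e j)) atTop (𝓝 L))
    (hrest : Summable ((Set.range e)ᶜ.indicator f)) :
    Tendsto (fun N => ∑ n ∈ range N, f n) atTop
      (𝓝 (L + ∑' n, (Set.range e)ᶜ.indicator f n)) := by
  refine ((he.tendsto_sum_range_indicator_range hfe).add hrest.hasSum.tendsto_sum_nat).congr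
    fun N => ?_
  rw [← sum_add_distrib]
  exact sum_congr rfl fun n _ => Set.indicator_self_add_compl_apply _ _ _

theorem Set.Finite.exists_lt_forall_le_of_lt {α : Type*} [LinearOrder α] [NoMinOrder α]
    {s : Set α} (hs : s.Finite) (b : α) : ∃ c < b, ∀ x ∈ s, x < b → x ≤ c := by
  obtain h | hne := (s ∩ Set.Iio b).eq_empty_or_nonempty
  · obtain ⟨c, hc⟩ := exists_lt b
    exact ⟨c, hc, fun x hx hxb => (h.subset ⟨hx, hxb⟩).elim⟩
  · obtain ⟨c, ⟨-, hc⟩, hmax⟩ :=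
      Set.exists_max_image _ id (hs.subset Set.inter_subset_left) hne
    exact ⟨c, hc, fun x hx hxb => hmax x ⟨hx, hxb⟩⟩

theorem Function.Periodic.finite_range_nat {α : Type*} {g : ℕ → α} {q : ℕ}
    (hg : Function.Periodic g q) (hq : q ≠ 0) : (Set.range g).Finite := by
  refine ((Set.finite_Iio q).image g).subset ?_
  rintro _ ⟨n, rfl⟩
  exact ⟨n % q, Nat.mod_lt n (Nat.pos_of_ne_zero hq), hg.map_mod_nat n⟩

theorem StrictMono.exists_tendsto_alternating_sum_div_rpow {e : ℕ → ℕ} (he : StrictMono e)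
    (he0 : 0 < e 0) {α : ℝ} (hα : 0 < α) :
    ∃ l, Tendsto (fun N => ∑ j ∈ range N, (-1) ^ j / (e j : ℝ) ^ α) atTop (𝓝 l) := by
  have hanti : Antitone fun j => 1 / (e j : ℝ) ^ α := fun i j hij => by
    have hi : (0 : ℝ) < e i := Nat.cast_pos.2 (he0.trans_le (he.monotone (Nat.zero_le i)))
    dsimp only
    gcongr
    exact he.monotone hij
  have hzero : Tendsto (fun j => 1 / (e j : ℝ) ^ α) atTop (𝓝 0) := by
    refine ((tendsto_rpow_atTop hα).comp
      (tendsto_natCast_atTop_atTop.comp he.tendsto_atTop)).inv_tendsto_atTop.congr fun j => ?_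
    simp
  simpa only [mul_one_div] using hanti.tendsto_alternating_series_of_tendsto_zero hzero

theorem not_summable_one_div_rpow_mul_add {a b α : ℝ} (ha : 0 < a) (hb : 0 ≤ b) (hα : α ≤ 1) :
    ¬ Summable fun j : ℕ => 1 / (a * j + b) ^ α := by
  intro h
  have hshift : Summable fun j : ℕ => 1 / |j + b / a| ^ α := by
    refine (h.mul_left (a ^ α)).congr fun j => ?_
    have hj : 0 ≤ (j : ℝ) + b / a := by positivity
    rw [abs_of_nonneg hj, show a * j + b = a * (j + b / a) by field_simp,
      mul_rpow ha.le hj]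
    field_simp
  linarith [(Real.summable_one_div_nat_add_rpow _ _).1 hshift]

theorem sin_odd_mul_pi_div_two (m : ℕ) : sin ((2 * m + 1 : ℕ) * π / 2) = (-1) ^ m := by
  have : ((2 * m + 1 : ℕ) : ℝ) * π / 2 = π / 2 + m * π := by push_cast; ring
  rw [this, sin_add_nat_mul_pi, sin_pi_div_two, mul_one]

theorem exists_mul_odd_eq_of_abs_sin_eq_one {p q₁ n : ℕ} (hq₁ : 0 < q₁) (hco : p.Coprime q₁)
    (h : |sin (π * p * n / (2 * q₁ : ℕ))| = 1) : ∃ j, q₁ * (2 * j + 1) = n := by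
  obtain ⟨m, hm⟩ := abs_sin_eq_one_iff.1 h
  have hmR : (q₁ : ℝ) * (2 * m + 1) = p * n := by
    push_cast at hm
    field_simp at hm
    nlinarith [pi_pos]
  have hmZ : (q₁ : ℤ) * (2 * m + 1) = p * n := by exact_mod_cast hmR
  obtain ⟨t, rfl⟩ : q₁ ∣ n :=
    hco.symm.dvd_of_dvd_mul_left (Int.natCast_dvd_natCast.1 ⟨2 * m + 1, by push_cast; linarith⟩)
  have hodd : Odd ((p : ℤ) * t) := ⟨m, by
    apply mul_left_cancel₀ (Int.natCast_ne_zero.2 hq₁.ne')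
    push_cast at hmZ
    linear_combination -hmZ⟩
  obtain ⟨j, rfl⟩ := (Int.odd_coe_nat _).1 (Int.odd_mul.1 hodd).2
  exact ⟨j, rfl⟩

theorem exists_lt_one_forall_abs_sin_le (p q : ℕ) (hq : q ≠ 0) :
    ∃ c < 1, ∀ n : ℕ, |sin (π * p * n / q)| < 1 → |sin (π * p * n / q)| ≤ c := by
  have hper : Function.Periodic (fun n : ℕ => |sin (π * p * n / q)|) q := fun n => by
    have : π * p * ((n + q : ℕ) : ℝ) / q = π * p * n / q + p * π := by
      push_cast; field_simp
    simp only [this, sin_add_nat_mul_pi, abs_mul, abs_pow, abs_neg, abs_one, one_pow, one_mul]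
  obtain ⟨c, hc1, hc⟩ := (hper.finite_range_nat hq).exists_lt_forall_le_of_lt 1
  exact ⟨c, hc1, fun n => hc _ ⟨n, rfl⟩⟩

noncomputable def sinPowTerm (p q : ℕ) (α : ℝ) (n : ℕ) : ℝ := sin (π * p * n / q) ^ n / (n : ℝ) ^ α

-- `0 ^ α = 0`, so the `n = 0` term is the junk value `1 / 0 = 0`.
theorem sinPowTerm_zero (p q : ℕ) {α : ℝ} (hα : α ≠ 0) : sinPowTerm p q α 0 = 0 := by
  simp [sinPowTerm, zero_rpow hα]

theorem abs_sinPowTerm_le (p q n : ℕ) {α : ℝ} (hα : 0 ≤ α) :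
    |sinPowTerm p q α n| ≤ |sin (π * p * n / q)| ^ n := by
  rw [sinPowTerm, abs_div, abs_pow]
  rcases n.eq_zero_or_pos with rfl | hn
  · rcases hα.eq_or_lt with rfl | hα
    · simp
    · simp [zero_rpow hα.ne']
  · exact div_le_self (by positivity) ((le_abs_self _).trans' (one_le_rpow (mod_cast hn) hα))

theorem sinPowTerm_odd_mul {k q₁ : ℕ} (hq₁ : Odd q₁) (α : ℝ) (j : ℕ) :
    sinPowTerm (2 * k + 1) (2 * q₁) α (q₁ * (2 * j + 1))
      = (-1) ^ (k + j) / ((q₁ * (2 * j + 1) : ℕ) : ℝ) ^ α := by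
  have hq₁0 : (q₁ : ℝ) ≠ 0 := mod_cast hq₁.pos.ne'
  have harg : π * ((2 * k + 1 : ℕ) : ℝ) * ((q₁ * (2 * j + 1) : ℕ) : ℝ) / ((2 * q₁ : ℕ) : ℝ)
      = ((2 * (2 * k * j + k + j) + 1 : ℕ) : ℝ) * π / 2 := by
    push_cast; field_simp; ring
  have hsign : (-1 : ℝ) ^ (2 * k * j + k + j) = (-1) ^ (k + j) := by
    rw [add_assoc, pow_add, ((even_two_mul k).mul_right j).neg_one_pow, one_mul]
  rw [sinPowTerm, harg, sin_odd_mul_pi_div_two, hsign, ← pow_mul, mul_comm, pow_mul,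
    (hq₁.mul (odd_two_mul_add_one j)).neg_one_pow]

theorem summable_indicator_compl_sinPowTerm {p q₁ : ℕ} (hq₁ : 0 < q₁) (hco : p.Coprime q₁)
    {α : ℝ} (hα : 0 ≤ α) :
    Summable ((Set.range fun j => q₁ * (2 * j + 1))ᶜ.indicator (sinPowTerm p (2 * q₁) α)) := by
  obtain ⟨c, hc1, hc⟩ := exists_lt_one_forall_abs_sin_le p (2 * q₁) (by omega)
  have hc0 : 0 ≤ c := (abs_nonneg _).trans (hc 0 (by simp))
  refine .of_norm_bounded (summable_geometric_of_lt_one hc0 hc1) fun n => ?_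
  by_cases hn : n ∈ Set.range fun j => q₁ * (2 * j + 1)
  · simpa [hn] using pow_nonneg hc0 n
  rw [Set.indicator_of_mem (Set.mem_compl hn), norm_eq_abs]
  have hsin : |sin (π * p * n / (2 * q₁ : ℕ))| < 1 :=
    (abs_sin_le_one _).lt_of_ne fun h => hn (exists_mul_odd_eq_of_abs_sin_eq_one hq₁ hco h)
  exact (abs_sinPowTerm_le p _ n hα).trans (pow_le_pow_left₀ (abs_nonneg _) (hc n hsin) n)

theorem stmt3_general (p q : ℕ) (hco : Nat.Coprime p q)
    (hq4 : q % 4 = 2) (α : ℝ) (hα0 : 0 < α) (hα1 : α ≤ 1) :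
    (∃ l : ℝ, Tendsto (fun N : ℕ => ∑ n ∈ Finset.Icc 1 N,
        Real.sin (Real.pi * p * n / q) ^ n / (n : ℝ) ^ α) atTop (nhds l)) ∧
    ¬ Summable (fun n : ℕ => |Real.sin (Real.pi * p * n / q) ^ n / (n : ℝ) ^ α|) := by
  obtain ⟨q₁, rfl, hq₁⟩ : ∃ q₁, q = 2 * q₁ ∧ Odd q₁ := ⟨q / 2, by omega, Nat.odd_iff.2 (by omega)⟩
  obtain ⟨k, rfl⟩ : ∃ k, p = 2 * k + 1 :=
    Nat.coprime_two_right.1 hco.coprime_mul_right_right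
  have hq₁0 : 0 < q₁ := hq₁.pos
  set e : ℕ → ℕ := fun j => q₁ * (2 * j + 1)
  have he : StrictMono e := fun i j hij => Nat.mul_lt_mul_of_pos_left (by omega) hq₁0
  have hfe (j : ℕ) :
      sinPowTerm (2 * k + 1) (2 * q₁) α (e j) = (-1) ^ k * ((-1) ^ j / (e j : ℝ) ^ α) := by
    rw [sinPowTerm_odd_mul hq₁, pow_add, mul_div_assoc]
  obtain ⟨l, hl⟩ := he.exists_tendsto_alternating_sum_div_rpow (by simpa [e] using hq₁0) hα0
  have hsum := he.tendsto_sum_range_of_summable_indicator_compl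
    (by simpa only [hfe, mul_sum] using hl.const_mul ((-1) ^ k))
    (summable_indicator_compl_sinPowTerm hq₁0 hco.coprime_mul_left_right hα0.le)
  refine ⟨⟨_, (hsum.comp (tendsto_add_atTop_nat 1)).congr fun N => ?_⟩, fun habs => ?_⟩
  · show ∑ n ∈ range (N + 1), _ = _
    rw [Nat.range_succ_eq_Icc_zero, ← insert_Icc_add_one_left_eq_Icc N.zero_le,
      sum_insert (by simp), sinPowTerm_zero _ _ hα0.ne', zero_add, zero_add]
    rfl
  · refine not_summable_one_div_rpow_mul_add (a := 2 * q₁) (b := q₁) (by positivity)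
      (by positivity) hα1 ((habs.comp_injective he.injective).congr fun j => ?_)
    change |sinPowTerm _ _ α (e j)| = _
    rw [sinPowTerm_odd_mul hq₁, abs_div, abs_pow, abs_neg, abs_one, one_pow,
      abs_of_pos (by positivity)]
    push_cast
    ring_nf

/-- If θ = p/q with p, q coprime positive integers, q ≡ 2 (mod 4), and 0 < α ≤ 1,
then ∑ sinⁿ(π p n / q) / n^α converges conditionally. -/
theorem stmt3 (p q : ℕ) (hp : 0 < p) (hq : 0 < q) (hco : Nat.Coprime p q)
    (hq4 : q % 4 = 2) (α : ℝ) (hα0 : 0 < α) (hα1 : α ≤ 1) :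
    (∃ l : ℝ, Tendsto (fun N : ℕ => ∑ n ∈ Finset.Icc 1 N,
        Real.sin (Real.pi * p * n / q) ^ n / (n : ℝ) ^ α) atTop (nhds l)) ∧
    ¬ Summable (fun n : ℕ => |Real.sin (Real.pi * p * n / q) ^ n / (n : ℝ) ^ α|) :=
  stmt3_general p q hco hq4 α hα0 hα1
end

section
/- Let θ be a positive irrational number with finite irrationality measure μ, let ν = 1/(2μ−2), and let 0 < ε < min(1, 1 − cos(πθ/2)). Let n₁ < n₂ < ... be the increasing sequence of all positive integers n with 1 − ε ≤ |cos(π n θ)| < 1 − ε/2. Then for every δ ∈ (0, ν) there exists A = A(θ, δ) > 0, independent of ε, such that n_k ≥ A k ε^{−ν+δ} for all k ≥ 1. -/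
/-!
If `1 - ε ≤ |cos (π n θ)|` then `n θ` lies within `√(ε / 2)` of an integer, because
`cos y ≤ 1 - 2 y² / π²` for `|y| ≤ π`. The difference `d` of two consecutive terms of the
sequence therefore satisfies `|d θ - a| ≤ 2 √(ε / 2)` for some integer `a`, and the
irrationality exponent bound `|θ - a / d| > c / d ^ (μ + δ')`, with `δ'` chosen so that
`1 / (μ + δ' - 1) = 2 (ν - δ)`, forces `d ≥ A ε ^ (-ν + δ)`. Summing these gaps gives the claim.
-/

open Real

lemma abs_cos_pi_mul_eq_cos_pi_mul_sub_round (x : ℝ) :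
    |cos (π * x)| = cos (π * (x - round x)) := by
  have hr := abs_le.mp (abs_sub_round x)
  have hcos : 0 ≤ cos (π * (x - round x)) :=
    cos_nonneg_of_mem_Icc ⟨by nlinarith [pi_pos], by nlinarith [pi_pos]⟩
  rw [show π * x = π * (x - round x) + (round x : ℤ) * π by ring, cos_add_int_mul_pi,
    abs_mul, abs_of_nonneg hcos, abs_neg_one_zpow, one_mul]

lemma abs_sub_round_le_sqrt_of_one_sub_le_abs_cos {ε x : ℝ} (h : 1 - ε ≤ |cos (π * x)|) :
    |x - round x| ≤ √(ε / 2) := by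
  have hr : |π * (x - round x)| ≤ π := by
    rw [abs_mul, abs_of_pos pi_pos]
    nlinarith [abs_sub_round x, pi_pos]
  have hquad := cos_le_one_sub_mul_cos_sq hr
  rw [abs_cos_pi_mul_eq_cos_pi_mul_sub_round] at h
  rw [mul_pow, ← mul_assoc, div_mul_cancel₀ _ (pow_ne_zero 2 pi_ne_zero)] at hquad
  exact abs_le_sqrt (by linarith)

lemma rpow_inv_lt_of_abs_mul_sub_le {θ c q η : ℝ} (hc : 0 ≤ c) (hq : 1 < q) (hη : 0 < η)
    (hθ : ∀ (a : ℤ) (b : ℕ), 1 ≤ b → c / (b : ℝ) ^ q < |θ - a / b|)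
    {n : ℕ} (hn : 1 ≤ n) {a : ℤ} (h : |n * θ - a| ≤ η) : (c / η) ^ (q - 1)⁻¹ < n := by
  have hn0 : (0 : ℝ) < n := by exact_mod_cast hn
  have hlt : c / η < (n : ℝ) ^ (q - 1) := by
    have h1 : c / (n : ℝ) ^ q < η / n := by
      calc c / (n : ℝ) ^ q < |θ - a / n| := hθ a n hn
        _ = |n * θ - a| / n := by
          rw [← abs_of_pos hn0, ← abs_div, abs_of_pos hn0, sub_div, mul_div_cancel_left₀ _ hn0.ne']
        _ ≤ η / n := by gcongr
    rw [rpow_sub hn0, rpow_one, div_lt_div_iff₀ hη hn0]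
    rw [div_lt_div_iff₀ (rpow_pos_of_pos hn0 q) hn0] at h1
    linarith
  calc (c / η) ^ (q - 1)⁻¹ < ((n : ℝ) ^ (q - 1)) ^ (q - 1)⁻¹ :=
        rpow_lt_rpow (by positivity) hlt (inv_pos.mpr (sub_pos.mpr hq))
    _ = n := rpow_rpow_inv hn0.le (sub_pos.mpr hq).ne'

lemma mul_succ_le_of_forall_lt {θ η B : ℝ} {seq : ℕ → ℕ} (hmono : StrictMono seq)
    (hpos : 0 < seq 0) (hclose : ∀ k, |seq k * θ - round (seq k * θ : ℝ)| ≤ η)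
    (hgap : ∀ (n : ℕ) (a : ℤ), 1 ≤ n → |n * θ - a| ≤ 2 * η → B < n) (k : ℕ) :
    B * (k + 1) ≤ seq k := by
  have hη : 0 ≤ η := (abs_nonneg _).trans (hclose 0)
  induction k with
  | zero => simpa using (hgap _ _ hpos (by linarith [hclose 0])).le
  | succ k ih =>
    have hlt := hmono k.lt_add_one
    have hdiff : |((seq (k + 1) - seq k : ℕ) : ℝ) * θ
        - (round (seq (k + 1) * θ : ℝ) - round (seq k * θ : ℝ) : ℤ)| ≤ 2 * η := by
      rw [Nat.cast_sub hlt.le]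
      push_cast
      calc _ = |(seq (k + 1) * θ - round (seq (k + 1) * θ : ℝ))
                - (seq k * θ - round (seq k * θ : ℝ))| := by congr 1; ring
        _ ≤ η + η := (abs_sub _ _).trans (add_le_add (hclose _) (hclose _))
        _ = 2 * η := by ring
    have hgapk := hgap _ _ (by omega) hdiff
    rw [Nat.cast_sub hlt.le] at hgapk
    push_cast at ih ⊢
    linarith

theorem stmt9_general (θ μ : ℝ)
    (hμθ : ∀ δ' : ℝ, 0 < δ' → ∃ c : ℝ, 0 < c ∧ ∀ (a : ℤ) (b : ℕ), 1 ≤ b →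
      c / (b : ℝ) ^ (μ + δ') < |θ - (a : ℝ) / b|)
    (ν : ℝ) (hν : ν = 1 / (2 * μ - 2)) (δ : ℝ) (hδ : δ ∈ Set.Ioo 0 ν) :
    ∃ A : ℝ, 0 < A ∧ ∀ ε : ℝ, 0 < ε → ε < min 1 (1 - Real.cos (Real.pi * θ / 2)) →
      ∀ seq : ℕ → ℕ, StrictMono seq →
        (∀ m : ℕ, m ∈ Set.range seq ↔
          (0 < m ∧ 1 - ε ≤ |Real.cos (Real.pi * m * θ)| ∧
            |Real.cos (Real.pi * m * θ)| < 1 - ε / 2)) →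
        ∀ k : ℕ, A * ((k : ℝ) + 1) * ε ^ (-ν + δ) ≤ (seq k : ℝ) := by
  obtain ⟨hδ0, hδν⟩ := hδ
  have hν0 : 0 < ν := hδ0.trans hδν
  have hμ : μ - 1 = (2 * ν)⁻¹ := by
    have : 2 * μ - 2 ≠ 0 := fun h => by simp [hν, h] at hν0
    rw [hν]; field_simp
  have hδ' : 0 < (2 * (ν - δ))⁻¹ - (μ - 1) := by
    rw [hμ, sub_pos]; gcongr; linarith
  obtain ⟨c, hc0, hc⟩ := hμθ _ hδ'
  have hq : μ + ((2 * (ν - δ))⁻¹ - (μ - 1)) - 1 = (2 * (ν - δ))⁻¹ := by ring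
  refine ⟨(c ^ 2 / 2) ^ (ν - δ), by positivity, fun ε hε0 _ seq hmono hrange k => ?_⟩
  have hmem (k : ℕ) := (hrange (seq k)).mp ⟨k, rfl⟩
  have hB : (c / (2 * √(ε / 2))) ^ (2 * (ν - δ)) = (c ^ 2 / 2) ^ (ν - δ) * ε ^ (-ν + δ) := by
    have hsq : (c / (2 * √(ε / 2))) ^ 2 = c ^ 2 / 2 / ε := by
      rw [div_pow, mul_pow, sq_sqrt (by positivity)]; field_simp
    rw [rpow_mul (by positivity), rpow_two, hsq, div_rpow (by positivity) hε0.le,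
      show -ν + δ = -(ν - δ) by ring, rpow_neg hε0.le, div_eq_mul_inv]
  rw [mul_right_comm, ← hB]
  refine mul_succ_le_of_forall_lt hmono (hmem 0).1
    (fun k => abs_sub_round_le_sqrt_of_one_sub_le_abs_cos
      (by rw [← mul_assoc]; exact (hmem k).2.1))
    (fun n a hn h => ?_) k
  have hq1 : 1 < μ + ((2 * (ν - δ))⁻¹ - (μ - 1)) := by
    linarith [hq, inv_pos.mpr (by linarith : 0 < 2 * (ν - δ))]
  simpa only [hq, inv_inv] using
    rpow_inv_lt_of_abs_mul_sub_le hc0.le hq1 (by positivity) hc hn h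

/-- Lemma 1 of the paper: lower bound on the gaps of the sequence of n with
1 − ε ≤ |cos(π n θ)| < 1 − ε/2, for θ irrational with finite irrationality measure μ. -/
theorem stmt9 (θ μ : ℝ) (hθ : 0 < θ) (hirr : Irrational θ)
    (hμθ : ∀ δ' : ℝ, 0 < δ' → ∃ c : ℝ, 0 < c ∧ ∀ (a : ℤ) (b : ℕ), 1 ≤ b →
      c / (b : ℝ) ^ (μ + δ') < |θ - (a : ℝ) / b|)
    (hμθ' : ∀ δ' : ℝ, 0 < δ' → ∃ c : ℝ, 0 < c ∧ ∀ (a : ℤ) (b : ℕ), 1 ≤ b →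
      c / (b : ℝ) ^ (μ + δ') < |1 / θ - (a : ℝ) / b|)
    (ν : ℝ) (hν : ν = 1 / (2 * μ - 2)) (δ : ℝ) (hδ : δ ∈ Set.Ioo 0 ν) :
    ∃ A : ℝ, 0 < A ∧ ∀ ε : ℝ, 0 < ε → ε < min 1 (1 - Real.cos (Real.pi * θ / 2)) →
      ∀ seq : ℕ → ℕ, StrictMono seq →
        (∀ m : ℕ, m ∈ Set.range seq ↔
          (0 < m ∧ 1 - ε ≤ |Real.cos (Real.pi * m * θ)| ∧
            |Real.cos (Real.pi * m * θ)| < 1 - ε / 2)) →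
        ∀ k : ℕ, A * ((k : ℝ) + 1) * ε ^ (-ν + δ) ≤ (seq k : ℝ) :=
  stmt9_general θ μ hμθ ν hν δ hδ
end

section
/- Let θ be irrational with finite irrationality measure μ = μ(θ). If α > 1 − 1/(2μ−2), then the series ∑_{n=1}^∞ cos^n(π n θ)/n^α converges absolutely. -/
/-!
Write `‖x‖ = |x - round x|`. Since `|cos πx| ≤ exp (-2‖x‖²)`, the terms with
`‖nθ‖ ≥ n^(-β)` are at most `exp (-2 n^(1-2β)) / n^α`, summable for `β < 1/2`. If `n < m`
satisfy `‖nθ‖ < n^(-β)` and `‖mθ‖ < m^(-β)`, then `‖(m-n)θ‖ < 2 n^(-β)`, whereas the Diophantine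
condition `|θ - a/b| > c / b^ν` gives `‖kθ‖ > c k^(1-ν)`; so `m - n ≫ n^γ` with `γ = β/(ν-1)`.
On such a sparse set `∑ n^(-α)` converges when `α + γ > 1`: the intervals `[n, n + c n^γ)` are
disjoint and each carries `≫ n^(-α)` of `∑ j^(-(α+γ))`. Dirichlet's theorem forces `ν ≥ 2`,
and `ν` slightly above `μ`, `β` slightly below `1/2` give `α + γ > 1` exactly when
`α > 1 - 1/(2μ-2)`.
-/

open Real Filter Topology

lemma abs_sub_round_sub_le (x y : ℝ) :
    |x - y - round (x - y)| ≤ |x - round x| + |y - round y| :=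
  calc |x - y - round (x - y)| ≤ |x - y - ((round x - round y : ℤ) : ℝ)| := round_le _ _
    _ = |(x - round x) - (y - round y)| := by push_cast; ring_nf
    _ ≤ |x - round x| + |y - round y| := abs_sub _ _

lemma abs_cos_pi_mul_le_exp (x : ℝ) : |cos (π * x)| ≤ exp (-2 * (x - round x) ^ 2) := by
  set r := x - round x
  have hr : |π * r| ≤ π / 2 := by
    rw [abs_mul, abs_of_pos pi_pos]
    nlinarith [abs_sub_round x, pi_pos]
  calc |cos (π * x)| = cos (π * r) := by
        rw [show π * x = π * r + round x * π by ring, cos_add_int_mul_pi, abs_mul, abs_zpow,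
          abs_neg, abs_one, one_zpow, one_mul,
          abs_of_nonneg (cos_nonneg_of_mem_Icc (abs_le.mp hr))]
    _ ≤ 1 - 2 / π ^ 2 * (π * r) ^ 2 := cos_le_one_sub_mul_cos_sq (by linarith [pi_pos])
    _ = -2 * r ^ 2 + 1 := by field_simp; ring
    _ ≤ exp (-2 * r ^ 2) := add_one_le_exp _

lemma summable_exp_neg_mul_rpow_div_rpow {a ε : ℝ} (ha : 0 < a) (hε : 0 < ε) (α : ℝ) :
    Summable fun n : ℕ => exp (-a * (n : ℝ) ^ ε) / (n : ℝ) ^ α := by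
  have hexp : (fun x : ℝ => exp (-a * x ^ ε)) =o[atTop] fun x => x ^ (α - 2) :=
    ((isLittleO_exp_neg_mul_rpow_atTop ha ((α - 2) / ε)).comp_tendsto
      (tendsto_rpow_atTop hε)).congr' .rfl <| (eventually_ge_atTop 0).mono fun x hx => by
        simp only [Function.comp_apply, ← rpow_mul hx, mul_div_cancel₀ _ hε.ne']
  have hdiv : (fun x : ℝ => exp (-a * x ^ ε) / x ^ α) =o[atTop] fun x => x ^ (-2 : ℝ) :=
    (hexp.mul_isBigO (Asymptotics.isBigO_refl (fun x => (x ^ α)⁻¹) atTop)).congr'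
      (.of_eq rfl) <| (eventually_gt_atTop 0).mono fun x hx => by
        simp only [← rpow_neg hx.le, ← rpow_add hx]; ring_nf
  exact summable_of_isBigO_nat (summable_nat_rpow.mpr (by norm_num))
    (hdiv.comp_tendsto tendsto_natCast_atTop_atTop).isBigO

lemma mul_rpow_neg_le_sum_Ico {n L : ℕ} (hn : 0 < n) (hL : L ≤ n) {s : ℝ} (hs : 0 ≤ s) :
    L * 2 ^ (-s) * (n : ℝ) ^ (-s) ≤ ∑ j ∈ Finset.Ico n (n + L), (j : ℝ) ^ (-s) := by
  have hterm : ∀ j ∈ Finset.Ico n (n + L), 2 ^ (-s) * (n : ℝ) ^ (-s) ≤ (j : ℝ) ^ (-s) := by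
    intro j hj
    obtain ⟨hnj, hjL⟩ := Finset.mem_Ico.mp hj
    rw [← mul_rpow zero_le_two (Nat.cast_nonneg n)]
    exact rpow_le_rpow_of_nonpos (by exact_mod_cast hn.trans_le hnj) (by norm_cast; omega)
      (neg_nonpos.mpr hs)
  simpa [mul_assoc] using Finset.card_nsmul_le_sum _ _ _ hterm

lemma rpow_neg_le_mul_sum_Ico_ceil {n : ℕ} (hn : 0 < n) {c γ α : ℝ} (hc : 0 < c) (hc1 : c ≤ 1)
    (hγ : γ ≤ 1) (hαγ : 0 ≤ α + γ) :
    (n : ℝ) ^ (-α) ≤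
      2 ^ (α + γ) / c * ∑ j ∈ Finset.Ico n (n + ⌈c * (n : ℝ) ^ γ⌉₊), (j : ℝ) ^ (-(α + γ)) := by
  have hn0 : (0 : ℝ) < n := by exact_mod_cast hn
  have hlen : c * (n : ℝ) ^ γ ≤ n := calc
    c * (n : ℝ) ^ γ ≤ 1 * (n : ℝ) ^ (1 : ℝ) := by
      gcongr
      exact_mod_cast hn
    _ = n := by simp
  have hpow : (n : ℝ) ^ γ * (n : ℝ) ^ (-(α + γ)) = (n : ℝ) ^ (-α) := by
    rw [← rpow_add hn0]; ring_nf
  calc (n : ℝ) ^ (-α)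
      = 2 ^ (α + γ) / c * (c * (n : ℝ) ^ γ * 2 ^ (-(α + γ)) * (n : ℝ) ^ (-(α + γ))) := by
        rw [rpow_neg zero_le_two, ← hpow]
        field_simp
    _ ≤ 2 ^ (α + γ) / c * (⌈c * (n : ℝ) ^ γ⌉₊ * 2 ^ (-(α + γ)) * (n : ℝ) ^ (-(α + γ))) := by
        gcongr
        exact Nat.le_ceil _
    _ ≤ 2 ^ (α + γ) / c * ∑ j ∈ Finset.Ico n (n + ⌈c * (n : ℝ) ^ γ⌉₊), (j : ℝ) ^ (-(α + γ)) := by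
        gcongr
        exact mul_rpow_neg_le_sum_Ico hn (Nat.ceil_le.mpr hlen) hαγ

lemma summable_indicator_rpow_neg_of_gap {S : Set ℕ} {c γ α : ℝ} (hS : ∀ n ∈ S, 0 < n)
    (hc : 0 < c) (hγ : γ ≤ 1) (hαγ : 1 < α + γ)
    (hgap : ∀ n ∈ S, ∀ m ∈ S, n < m → c * (n : ℝ) ^ γ ≤ m - n) :
    Summable (S.indicator fun n : ℕ => (n : ℝ) ^ (-α)) := by
  classical
  -- with `c ≤ 1` the intervals `I n` below lie in `[n, 2n)`
  wlog hc1 : c ≤ 1 generalizing c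
  · refine this (c := 1) one_pos (fun n hn m hm hnm => (hgap n hn m hm hnm).trans' ?_) le_rfl
    gcongr
    linarith
  set s := α + γ
  set I : ℕ → Finset ℕ := fun n => Finset.Ico n (n + ⌈c * (n : ℝ) ^ γ⌉₊)
  have hterm : ∀ n ∈ S, (n : ℝ) ^ (-α) ≤ 2 ^ s / c * ∑ j ∈ I n, (j : ℝ) ^ (-s) :=
    fun n hn => rpow_neg_le_mul_sum_Ico_ceil (hS n hn) hc hc1 hγ (by linarith)
  have hdisj : S.PairwiseDisjoint I := by
    intro n hn m hm hnm
    wlog hlt : n < m generalizing n m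
    · exact (this hm hn hnm.symm (lt_of_le_of_ne (not_lt.mp hlt) hnm.symm)).symm
    have hceil : ⌈c * (n : ℝ) ^ γ⌉₊ ≤ m - n :=
      Nat.ceil_le.mpr (by rw [Nat.cast_sub hlt.le]; exact hgap n hn m hm hlt)
    refine Finset.disjoint_left.mpr fun j hjn hjm => ?_
    simp only [I, Finset.mem_Ico] at hjn hjm
    omega
  refine summable_of_sum_le (c := 2 ^ s / c * ∑' j : ℕ, (j : ℝ) ^ (-s))
    (Set.indicator_nonneg fun n _ => by positivity) fun u => ?_
  have hsum : Summable fun j : ℕ => (j : ℝ) ^ (-s) := summable_nat_rpow.mpr (by linarith)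
  calc ∑ n ∈ u, S.indicator (fun n : ℕ => (n : ℝ) ^ (-α)) n
      = ∑ n ∈ u with n ∈ S, (n : ℝ) ^ (-α) := (Finset.sum_filter _ _).symm
    _ ≤ ∑ n ∈ u with n ∈ S, 2 ^ s / c * ∑ j ∈ I n, (j : ℝ) ^ (-s) :=
        Finset.sum_le_sum fun n hn => hterm n (Finset.mem_filter.mp hn).2
    _ = 2 ^ s / c * ∑ j ∈ (u.filter (· ∈ S)).biUnion I, (j : ℝ) ^ (-s) := by
        rw [Finset.sum_biUnion (hdisj.subset fun n hn => (Finset.mem_filter.mp hn).2),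
          Finset.mul_sum]
    _ ≤ 2 ^ s / c * ∑' j : ℕ, (j : ℝ) ^ (-s) := by
        gcongr
        exact hsum.sum_le_tsum _ fun j _ => by positivity

def DiophantineCondition (θ c ν : ℝ) : Prop :=
  ∀ (a : ℤ) (b : ℕ), 1 ≤ b → c / (b : ℝ) ^ ν < |θ - a / b|

def nearIntegerIndices (θ β : ℝ) : Set ℕ :=
  {n | 0 < n ∧ |n * θ - round (n * θ)| < (n : ℝ) ^ (-β)}

section Diophantine

variable {θ c ν : ℝ}

lemma mul_rpow_lt_one_of_diophantineCondition (h : DiophantineCondition θ c ν) (hν : 1 ≤ ν)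
    {N : ℕ} (hN : 0 < N) : c * ((N : ℝ) + 1) ^ (2 - ν) < 1 := by
  obtain ⟨a, k, hk0, hkN, hak⟩ := Real.exists_int_int_abs_mul_sub_le θ hN
  lift k to ℕ using hk0.le
  have hk : (0 : ℝ) < k := by exact_mod_cast hk0
  have hN1 : (0 : ℝ) < N + 1 := by positivity
  have happrox : c / (k : ℝ) ^ ν < 1 / (k * (N + 1)) := calc
    c / (k : ℝ) ^ ν < |θ - a / k| := h a k (by exact_mod_cast hk0)
    _ = |k * θ - a| / k := by
      rw [← abs_of_pos hk, ← abs_div, abs_of_pos hk]; congr 1; field_simp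
    _ ≤ 1 / (k * (N + 1)) := by
      rw [div_le_div_iff₀ hk (by positivity)]; push_cast at hak
      calc |k * θ - a| * (k * (N + 1)) ≤ 1 / (N + 1) * (k * (N + 1)) := by gcongr
        _ = 1 * k := by field_simp
  have hmain : c * (N + 1) < (k : ℝ) ^ (ν - 1) := by
    rw [div_lt_div_iff₀ (by positivity) (by positivity), one_mul,
      show (k : ℝ) ^ ν = (k : ℝ) ^ (ν - 1) * k by rw [← rpow_add_one hk.ne']; ring_nf] at happrox
    nlinarith
  have hkN' : (k : ℝ) ^ (ν - 1) ≤ ((N : ℝ) + 1) ^ (ν - 1) :=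
    rpow_le_rpow hk.le (by norm_cast; omega) (by linarith)
  have hsplit : ((N : ℝ) + 1) ^ (2 - ν) * ((N : ℝ) + 1) ^ (ν - 1) = N + 1 := by
    rw [← rpow_add hN1]; norm_num
  by_contra! hbig
  have := mul_le_mul_of_nonneg_right hbig (rpow_pos_of_pos hN1 (ν - 1)).le
  rw [one_mul, mul_assoc, hsplit] at this
  linarith

lemma two_le_of_diophantineCondition (h : DiophantineCondition θ c ν) (hc : 0 < c) : 2 ≤ ν := by
  wlog hν : 1 ≤ ν generalizing ν
  · refine absurd (this (ν := 1) (fun a b hb => ?_) le_rfl) (by norm_num)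
    have hb1 : (1 : ℝ) ≤ b := by exact_mod_cast hb
    calc c / (b : ℝ) ^ (1 : ℝ) ≤ c / (b : ℝ) ^ ν :=
          div_le_div_of_nonneg_left hc.le (rpow_pos_of_pos (by linarith) ν)
            (rpow_le_rpow_of_exponent_le hb1 (by linarith))
      _ < |θ - a / b| := h a b hb
  by_contra! hν2
  obtain ⟨N, hN, hN0⟩ := (((tendsto_rpow_atTop (by linarith : (0 : ℝ) < 2 - ν)).comp
    (tendsto_atTop_add_const_right _ 1 tendsto_natCast_atTop_atTop)).eventually_ge_atTop c⁻¹
    |>.and (eventually_gt_atTop 0)).exists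
  have hbig : 1 ≤ c * ((N : ℝ) + 1) ^ (2 - ν) :=
    (mul_inv_cancel₀ hc.ne').symm.trans_le (mul_le_mul_of_nonneg_left hN hc.le)
  exact (mul_rpow_lt_one_of_diophantineCondition h hν hN0).not_ge hbig

lemma mul_rpow_lt_abs_mul_sub_round (h : DiophantineCondition θ c ν) {k : ℕ} (hk : 0 < k) :
    c * (k : ℝ) ^ (1 - ν) < |k * θ - round (k * θ)| := by
  have hk' : (0 : ℝ) < k := by exact_mod_cast hk
  calc c * (k : ℝ) ^ (1 - ν) = c / (k : ℝ) ^ ν * k := by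
        rw [rpow_sub hk', rpow_one]; ring
    _ < |θ - round (k * θ) / k| * k := by gcongr; exact h _ k hk
    _ = |k * θ - round (k * θ)| := by
        rw [← abs_of_pos hk', ← abs_mul, abs_of_pos hk']; congr 1; field_simp

lemma rpow_mul_rpow_lt_sub_of_mem_nearIntegerIndices (h : DiophantineCondition θ c ν)
    (hc : 0 < c) (hν : 1 < ν) {β : ℝ} (hβ : 0 ≤ β) {n m : ℕ}
    (hn : n ∈ nearIntegerIndices θ β) (hm : m ∈ nearIntegerIndices θ β) (hnm : n < m) :
    (c / 2) ^ (ν - 1)⁻¹ * (n : ℝ) ^ (β / (ν - 1)) < m - n := by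
  obtain ⟨hn0, hnθ⟩ := hn
  obtain ⟨-, hmθ⟩ := hm
  have hn0' : (0 : ℝ) < n := by exact_mod_cast hn0
  have hk : (0 : ℝ) < ((m - n : ℕ) : ℝ) := by exact_mod_cast Nat.sub_pos_of_lt hnm
  have hkθ :
      |((m - n : ℕ) : ℝ) * θ - round (((m - n : ℕ) : ℝ) * θ)| < 2 * (n : ℝ) ^ (-β) := calc
    _ ≤ |m * θ - round (m * θ)| + |n * θ - round (n * θ)| := by
        rw [Nat.cast_sub hnm.le, sub_mul]; exact abs_sub_round_sub_le _ _
    _ < (m : ℝ) ^ (-β) + (n : ℝ) ^ (-β) := add_lt_add hmθ hnθ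
    _ ≤ 2 * (n : ℝ) ^ (-β) := by
        have : (m : ℝ) ^ (-β) ≤ (n : ℝ) ^ (-β) :=
          rpow_le_rpow_of_nonpos hn0' (by exact_mod_cast hnm.le) (neg_nonpos.mpr hβ)
        linarith
  have hpow : c / 2 * (n : ℝ) ^ β < ((m - n : ℕ) : ℝ) ^ (ν - 1) := by
    have := (mul_rpow_lt_abs_mul_sub_round h (Nat.sub_pos_of_lt hnm)).trans hkθ
    rw [show 1 - ν = -(ν - 1) by ring, rpow_neg hk.le, rpow_neg hn0'.le, ← div_eq_mul_inv,
      ← div_eq_mul_inv, div_lt_div_iff₀ (by positivity) (by positivity)] at this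
    linarith
  have hroot := rpow_lt_rpow (by positivity) hpow (inv_pos.mpr (sub_pos.mpr hν))
  rwa [mul_rpow (by positivity) (by positivity), ← rpow_mul hn0'.le, ← rpow_mul hk.le,
    mul_inv_cancel₀ (sub_pos.mpr hν).ne', rpow_one, ← div_eq_mul_inv, Nat.cast_sub hnm.le]
    at hroot

end Diophantine

lemma abs_cos_pow_le_exp_of_notMem {θ β : ℝ} {N : ℕ} (hN : 0 < N)
    (hθ : N ∉ nearIntegerIndices θ β) :
    |cos (π * N * θ)| ^ N ≤ exp (-2 * (N : ℝ) ^ (1 - 2 * β)) := by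
  have hN' : (0 : ℝ) < N := by exact_mod_cast hN
  have hfar : (N : ℝ) ^ (-β) ≤ |N * θ - round (N * θ)| := by
    simpa [nearIntegerIndices, hN] using hθ
  calc |cos (π * N * θ)| ^ N ≤ exp (-2 * (N * θ - round (N * θ)) ^ 2) ^ N := by
        gcongr; rw [mul_assoc]; exact abs_cos_pi_mul_le_exp _
    _ = exp (N * (-2 * |N * θ - round (N * θ)| ^ 2)) := by rw [← exp_nat_mul, sq_abs]
    _ ≤ exp (-2 * (N : ℝ) ^ (1 - 2 * β)) := by
        refine exp_le_exp.mpr ?_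
        have hsq : (N : ℝ) ^ (-(2 * β)) ≤ |N * θ - round (N * θ)| ^ 2 := by
          rw [show -(2 * β) = -β * 2 by ring, rpow_mul hN'.le]
          norm_cast
          gcongr
        rw [show 1 - 2 * β = 1 + -(2 * β) by ring, rpow_add hN', rpow_one]
        nlinarith

lemma abs_cos_pow_div_rpow_le (θ α β : ℝ) {N : ℕ} (hN : 0 < N) :
    |cos (π * N * θ) ^ N / (N : ℝ) ^ α| ≤
      (nearIntegerIndices θ β).indicator (fun n : ℕ => (n : ℝ) ^ (-α)) N +
        exp (-2 * (N : ℝ) ^ (1 - 2 * β)) / (N : ℝ) ^ α := by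
  have hNα : (0 : ℝ) < (N : ℝ) ^ α := by positivity
  rw [abs_div, abs_pow, abs_of_pos hNα]
  by_cases hθ : N ∈ nearIntegerIndices θ β
  · rw [Set.indicator_of_mem hθ, rpow_neg (Nat.cast_nonneg N), ← one_div]
    refine le_add_of_le_of_nonneg ?_ (by positivity)
    gcongr
    exact pow_le_one₀ (abs_nonneg _) (abs_cos_le_one _)
  · rw [Set.indicator_of_notMem hθ, zero_add]
    gcongr
    exact abs_cos_pow_le_exp_of_notMem hN hθ

theorem summable_abs_cos_pow_div_rpow {θ c ν α β : ℝ}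
    (h : DiophantineCondition θ c ν) (hc : 0 < c)
    (hβ0 : 0 ≤ β) (hβ : β < 1 / 2) (hαβ : (1 - α) * (ν - 1) < β) :
    Summable fun n : ℕ => |cos (π * ((n : ℝ) + 1) * θ) ^ (n + 1) / ((n : ℝ) + 1) ^ α| := by
  have hν := two_le_of_diophantineCondition h hc
  have hnear : Summable ((nearIntegerIndices θ β).indicator fun n : ℕ => (n : ℝ) ^ (-α)) :=
    summable_indicator_rpow_neg_of_gap (c := (c / 2) ^ (ν - 1)⁻¹) (γ := β / (ν - 1))
      (fun n hn => hn.1) (by positivity) (div_le_one_of_le₀ (by linarith) (by linarith))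
      (by linarith [(lt_div_iff₀ (by linarith : 0 < ν - 1)).mpr hαβ])
      fun n hn m hm hnm =>
        (rpow_mul_rpow_lt_sub_of_mem_nearIntegerIndices h hc (by linarith) hβ0 hn hm hnm).le
  have hfar := summable_exp_neg_mul_rpow_div_rpow two_pos (by linarith : 0 < 1 - 2 * β) α
  refine .of_nonneg_of_le (fun _ => abs_nonneg _) (fun n => ?_)
    ((summable_nat_add_iff 1).mpr (hnear.add hfar))
  simpa using abs_cos_pow_div_rpow_le θ α β n.succ_pos

theorem stmt10_general (θ μ α : ℝ)
    (hμ : ∀ δ' : ℝ, 0 < δ' → ∃ c : ℝ, 0 < c ∧ ∀ (a : ℤ) (b : ℕ), 1 ≤ b →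
      c / (b : ℝ) ^ (μ + δ') < |θ - (a : ℝ) / b|)
    (hα : 1 - 1 / (2 * μ - 2) < α) :
    Summable (fun n : ℕ =>
      |Real.cos (Real.pi * ((n : ℝ) + 1) * θ) ^ (n + 1) / ((n : ℝ) + 1) ^ α|) := by
  have hμ2 : 2 ≤ μ := le_of_forall_pos_le_add fun δ hδ => by
    obtain ⟨c, hc, h⟩ := hμ δ hδ
    exact two_le_of_diophantineCondition h hc
  have hαμ : (1 - α) * (μ - 1) < 1 / 2 := by
    rw [sub_lt_comm, lt_div_iff₀ (by linarith)] at hα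
    linarith
  have hsmall : ∀ᶠ δ in 𝓝 (0 : ℝ), (1 - α) * (μ + δ - 1) < 1 / 2 :=
    ContinuousAt.eventually_lt (by fun_prop) continuousAt_const (by simpa using hαμ)
  obtain ⟨δ, hδα, hδ⟩ := (hsmall.filter_mono nhdsWithin_le_nhds |>.and
    (self_mem_nhdsWithin (s := Set.Ioi 0))).exists
  obtain ⟨β, hβ0, hβ⟩ := exists_between (max_lt hδα one_half_pos)
  obtain ⟨c, hc, h⟩ := hμ δ hδ
  exact summable_abs_cos_pow_div_rpow h hc ((le_max_right _ _).trans hβ0.le) hβ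
    ((le_max_left _ _).trans_lt hβ0)

/-- If θ is irrational with finite irrationality measure μ and α > 1 − 1/(2μ−2),
then ∑ cosⁿ(π n θ)/n^α converges absolutely. -/
theorem stmt10 (θ μ α : ℝ) (hirr : Irrational θ)
    (hμ : ∀ δ' : ℝ, 0 < δ' → ∃ c : ℝ, 0 < c ∧ ∀ (a : ℤ) (b : ℕ), 1 ≤ b →
      c / (b : ℝ) ^ (μ + δ') < |θ - (a : ℝ) / b|)
    (hα : 1 - 1 / (2 * μ - 2) < α) :
    Summable (fun n : ℕ =>
      |Real.cos (Real.pi * ((n : ℝ) + 1) * θ) ^ (n + 1) / ((n : ℝ) + 1) ^ α|) :=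
  stmt10_general θ μ α hμ hα
end

section
/- If α > 1/2, then for almost every real θ (with respect to Lebesgue measure) the series ∑_{n=1}^∞ |sin(π n θ)|^n / n^α converges. -/
open Real Filter MeasureTheory

/-!
Substituting `u = π n θ` and using the `π`-periodicity of `|sin u|ⁿ`, the integral of
`|sin (π n θ)|ⁿ` over any unit interval equals `Iₙ / π`, where `Iₙ = ∫₀^π sinⁿ`. Wallis' identity
`(n + 1) Iₙ Iₙ₊₁ = 2π` and `Iₙ₊₁ ≤ Iₙ` give `Iₙ ≤ √(2π / n)`, so the integrals of the terms over a
unit interval are `O(n^(-α - 1/2))`, a summable sequence when `α > 1/2`. A series of nonnegative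
functions whose integrals are summable converges almost everywhere, and `ℝ` is a countable union
of unit intervals.
-/

open intervalIntegral Set

theorem integral_sin_pow_mul_integral_sin_pow_succ (n : ℕ) :
    ((n : ℝ) + 1) * ((∫ x in 0..π, sin x ^ n) * ∫ x in 0..π, sin x ^ (n + 1)) = 2 * π := by
  induction n with
  | zero => simp; ring
  | succ m ih =>
    have hrec : ∫ x in 0..π, sin x ^ (m + 2) = (m + 1) / (m + 2) * ∫ x in 0..π, sin x ^ m := by
      simp [integral_sin_pow m]
    rw [← ih, hrec]
    push_cast
    field_simp
    ring

theorem integral_sin_pow_le_sqrt {n : ℕ} (hn : n ≠ 0) :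
    ∫ x in 0..π, sin x ^ n ≤ √(2 * π / n) := by
  obtain ⟨m, rfl⟩ := Nat.exists_eq_succ_of_ne_zero hn
  refine le_sqrt_of_sq_le ?_
  have hprod := integral_sin_pow_mul_integral_sin_pow_succ m
  calc (∫ x in 0..π, sin x ^ (m + 1)) ^ 2
      ≤ (∫ x in 0..π, sin x ^ m) * ∫ x in 0..π, sin x ^ (m + 1) := by
        rw [sq]
        exact mul_le_mul_of_nonneg_right (integral_sin_pow_succ_le m) (integral_sin_pow_pos _).le
    _ = 2 * π / (m + 1 : ℕ) := by
        push_cast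
        field_simp
        linarith

theorem integral_abs_sin_pi_mul_natCast_mul_pow {n : ℕ} (hn : n ≠ 0) (m : ℕ) (a : ℝ) :
    ∫ θ in a..a + 1, |sin (π * n * θ)| ^ m = (∫ x in 0..π, sin x ^ m) / π := by
  have hper : Function.Periodic (fun u => |sin u| ^ m) π := fun u => by simp [sin_add_pi]
  have hint : ∀ t₁ t₂, IntervalIntegrable (fun u => |sin u| ^ m) volume t₁ t₂ :=
    fun _ _ => by apply Continuous.intervalIntegrable; fun_prop
  have hbase : ∫ u in 0..π, |sin u| ^ m = ∫ x in 0..π, sin x ^ m := by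
    refine integral_congr fun x hx => ?_
    rw [uIcc_of_le pi_pos.le] at hx
    simp [abs_of_nonneg (sin_nonneg_of_mem_Icc hx)]
  have hc : π * n ≠ 0 := by positivity
  calc ∫ θ in a..a + 1, |sin (π * n * θ)| ^ m
      = (π * n)⁻¹ • ∫ u in π * n * a..π * n * a + (n : ℤ) • π, |sin u| ^ m := by
        rw [integral_comp_mul_left (fun u => |sin u| ^ m) hc]
        congr 2
        rw [zsmul_eq_mul, Int.cast_natCast]
        ring
    _ = (∫ x in 0..π, sin x ^ m) / π := by
        rw [hper.intervalIntegral_add_zsmul_eq _ _ hint, hper.intervalIntegral_add_eq _ 0,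
          zero_add, hbase, zsmul_eq_mul, smul_eq_mul]
        push_cast
        field_simp

theorem integral_abs_sin_pi_mul_natCast_mul_pow_div_rpow_le {α : ℝ} (hα : 0 < α) (n : ℕ)
    (a : ℝ) :
    (∫ θ in a..a + 1, |sin (π * n * θ)| ^ n / (n : ℝ) ^ α) ≤
      √(2 * π) / π / (n : ℝ) ^ (α + 1 / 2) := by
  rcases Nat.eq_zero_or_pos n with rfl | hn
  · simp [zero_rpow hα.ne']
    positivity
  have hn' : (0 : ℝ) < n := Nat.cast_pos.2 hn
  rw [intervalIntegral.integral_div, integral_abs_sin_pi_mul_natCast_mul_pow hn.ne',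
    rpow_add hn', ← sqrt_eq_rpow]
  calc (∫ x in 0..π, sin x ^ n) / π / (n : ℝ) ^ α ≤ √(2 * π / n) / π / (n : ℝ) ^ α := by
        gcongr
        exact integral_sin_pow_le_sqrt hn.ne'
    _ = √(2 * π) / π / ((n : ℝ) ^ α * √n) := by
        rw [sqrt_div' _ hn'.le]
        field_simp

theorem ae_summable_of_summable_integral {X ι : Type*} [MeasurableSpace X] [Countable ι]
    {μ : Measure X} {f : ι → X → ℝ} (hf_nonneg : ∀ i, 0 ≤ᵐ[μ] f i)
    (hf_int : ∀ i, Integrable (f i) μ) (hsum : Summable fun i => ∫ x, f i x ∂μ) :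
    ∀ᵐ x ∂μ, Summable fun i => f i x := by
  have hmeas : ∀ i, AEMeasurable (fun x => ENNReal.ofReal (f i x)) μ :=
    fun i => (hf_int i).aemeasurable.ennreal_ofReal
  have hfin : ∫⁻ x, ∑' i, ENNReal.ofReal (f i x) ∂μ ≠ ⊤ := by
    simp_rw [lintegral_tsum hmeas,
      ← ofReal_integral_eq_lintegral_ofReal (hf_int _) (hf_nonneg _),
      ← ENNReal.ofReal_tsum_of_nonneg (fun i => integral_nonneg_of_ae (hf_nonneg i)) hsum]
    exact ENNReal.ofReal_ne_top
  filter_upwards [ae_lt_top' (AEMeasurable.tsum hmeas) hfin, ae_all_iff.2 hf_nonneg]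
    with x hx hx_nonneg
  exact (ENNReal.summable_toReal hx.ne).congr fun i => ENNReal.toReal_ofReal (hx_nonneg i)

theorem ae_of_forall_ae_restrict_Ioc_intCast {μ : Measure ℝ} {p : ℝ → Prop}
    (h : ∀ k : ℤ, ∀ᵐ x ∂μ.restrict (Ioc (k : ℝ) (k + 1)), p x) : ∀ᵐ x ∂μ, p x := by
  rw [← Measure.restrict_univ (μ := μ), ← iUnion_Ioc_intCast, ae_restrict_iUnion_iff]
  exact h

/-- If α > 1/2, then for almost every real θ the series ∑ |sin(π n θ)|ⁿ / n^α converges. -/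
theorem stmt13 (α : ℝ) (hα : 1 / 2 < α) :
    ∀ᵐ θ : ℝ ∂volume,
      Summable (fun n : ℕ => |Real.sin (Real.pi * n * θ)| ^ n / (n : ℝ) ^ α) := by
  have hcont : ∀ n : ℕ, Continuous fun θ : ℝ => |sin (π * n * θ)| ^ n / (n : ℝ) ^ α :=
    fun n => by fun_prop
  have hdom : Summable fun n : ℕ => √(2 * π) / π / (n : ℝ) ^ (α + 1 / 2) := by
    simpa [div_eq_mul_inv] using
      (Real.summable_nat_rpow_inv.2 (by linarith : 1 < α + 1 / 2)).mul_left (√(2 * π) / π)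
  refine ae_of_forall_ae_restrict_Ioc_intCast fun k =>
    ae_summable_of_summable_integral (fun n => ae_of_all _ fun θ => by positivity)
      (fun n => (hcont n).integrableOn_Ioc) (hdom.of_nonneg_of_le
        (fun n => integral_nonneg fun θ => by positivity) fun n => ?_)
  rw [← integral_of_le (by linarith)]
  exact integral_abs_sin_pi_mul_natCast_mul_pow_div_rpow_le (by linarith) n k
end

section
/- For α < 1, as z → 1⁻, ∑_{k=1}^∞ z^k / k^α is asymptotically equivalent to Γ(1−α) (log(1/z))^{α−1}. -/
/-!
Put `t = -log z` and `f y = exp (-y) * y ^ (-α)`. Then the series equals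
`t ^ (α - 1) * ∑ t f (t (k + 1))`, a Riemann sum of `∫₀^∞ f = Γ(1 - α)` with mesh `t → 0⁺`.
That Riemann sum is the integral over `(0, ∞)` of the step function `f (t ⌈x / t⌉)`, which tends
to `f x` pointwise and, for `t < 1`, is dominated by the integrable `f x + e f (x + 1)`;
dominated convergence finishes the proof.
-/

open Real Filter MeasureTheory Set Topology Function

section CeilStep

variable {t : ℝ}

lemma le_mul_natCeil_div (ht : 0 < t) (x : ℝ) : x ≤ t * ⌈x / t⌉₊ := by
  rw [mul_comm, ← div_le_iff₀ ht]
  exact Nat.le_ceil _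

lemma mul_natCeil_div_lt_add (ht : 0 < t) {x : ℝ} (hx : 0 ≤ x) : t * ⌈x / t⌉₊ < x + t := by
  have := Nat.ceil_lt_add_one (div_nonneg hx ht.le)
  calc t * ⌈x / t⌉₊ < t * (x / t + 1) := by gcongr
    _ = x + t := by field_simp

lemma natCeil_div_eq_of_mem_Ioc (ht : 0 < t) {k : ℕ} {x : ℝ}
    (hx : x ∈ Ioc (t * k) (t * (k + 1 : ℕ))) : ⌈x / t⌉₊ = k + 1 := by
  rw [Nat.ceil_eq_iff k.succ_ne_zero, Nat.succ_sub_one, lt_div_iff₀ ht, div_le_iff₀ ht,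
    mul_comm, mul_comm _ t]
  exact hx

lemma iUnion_Ioc_mul_natCast (ht : 0 < t) :
    ⋃ k : ℕ, Ioc (t * k) (t * (k + 1 : ℕ)) = Ioi 0 := by
  refine subset_antisymm (iUnion_subset fun k x hx => ?_) fun x (hx : 0 < x) => ?_
  · exact lt_of_le_of_lt (by positivity) hx.1
  · obtain ⟨k, hk⟩ := Nat.exists_eq_add_one_of_ne_zero
      (Nat.ceil_pos.mpr (div_pos hx ht)).ne'
    refine mem_iUnion.mpr ⟨k, ?_, ?_⟩
    · have := mul_natCeil_div_lt_add ht hx.le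
      push_cast [hk] at this
      linarith
    · simpa [hk] using le_mul_natCeil_div ht x

lemma pairwise_disjoint_Ioc_mul_natCast (ht : 0 < t) :
    Pairwise (Disjoint on fun k : ℕ => Ioc (t * k) (t * (k + 1 : ℕ))) :=
  (monotone_nat_of_le_succ fun k => by gcongr; simp).pairwise_disjoint_on_Ioc_succ

lemma tendsto_mul_natCeil_div {x : ℝ} (hx : 0 ≤ x) :
    Tendsto (fun t : ℝ => t * ⌈x / t⌉₊) (𝓝[>] 0) (𝓝 x) := by
  have hupper : Tendsto (fun t : ℝ => x + t) (𝓝[>] 0) (𝓝 x) := by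
    simpa using tendsto_nhdsWithin_of_tendsto_nhds ((continuous_const_add x).tendsto 0)
  refine tendsto_of_tendsto_of_tendsto_of_le_of_le' tendsto_const_nhds hupper ?_ ?_
  all_goals filter_upwards [self_mem_nhdsWithin] with t (ht : 0 < t)
  · exact le_mul_natCeil_div ht x
  · exact (mul_natCeil_div_lt_add ht hx).le

lemma integral_Ioi_comp_mul_natCeil_div (ht : 0 < t) (g : ℝ → ℝ)
    (hg : IntegrableOn (fun x => g (t * ⌈x / t⌉₊)) (Ioi 0)) :
    ∫ x in Ioi 0, g (t * ⌈x / t⌉₊) = ∑' k : ℕ, t * g (t * (k + 1 : ℕ)) := by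
  rw [← iUnion_Ioc_mul_natCast ht] at hg ⊢
  rw [integral_iUnion (fun _ => measurableSet_Ioc) (pairwise_disjoint_Ioc_mul_natCast ht) hg]
  refine tsum_congr fun k => ?_
  rw [setIntegral_congr_fun measurableSet_Ioc fun x hx => by
      rw [natCeil_div_eq_of_mem_Ioc ht hx],
    setIntegral_const, measureReal_def, volume_Ioc, smul_eq_mul,
    ENNReal.toReal_ofReal (by push_cast; nlinarith)]
  push_cast
  ring

end CeilStep

theorem tendsto_tsum_mul_natCast_nhdsGT_zero {g b : ℝ → ℝ} (hg : Measurable g)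
    (hg_cont : ∀ x > 0, ContinuousAt g x) (hb : IntegrableOn b (Ioi 0))
    (hdom : ∀ x > 0, ∀ y ∈ Icc x (x + 1), ‖g y‖ ≤ b x) :
    Tendsto (fun t => ∑' k : ℕ, t * g (t * (k + 1 : ℕ))) (𝓝[>] 0) (𝓝 (∫ x in Ioi 0, g x)) := by
  have hstep_dom : ∀ t ∈ Ioo (0 : ℝ) 1, ∀ x > 0, ‖g (t * ⌈x / t⌉₊)‖ ≤ b x := fun t ht x hx =>
    hdom x hx _ ⟨le_mul_natCeil_div ht.1 x, by linarith [mul_natCeil_div_lt_add ht.1 hx.le, ht.2]⟩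
  have hmeas : ∀ t, AEStronglyMeasurable (fun x => g (t * ⌈x / t⌉₊)) (volume.restrict (Ioi 0)) :=
    fun t => (hg.comp (by fun_prop)).aestronglyMeasurable
  have hlim : Tendsto (fun t => ∫ x in Ioi 0, g (t * ⌈x / t⌉₊)) (𝓝[>] 0)
      (𝓝 (∫ x in Ioi 0, g x)) := by
    refine tendsto_integral_filter_of_dominated_convergence b (.of_forall hmeas) ?_ hb ?_
    · filter_upwards [Ioo_mem_nhdsGT one_pos] with t ht
      filter_upwards [ae_restrict_mem measurableSet_Ioi] with x hx
      exact hstep_dom t ht x hx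
    · filter_upwards [ae_restrict_mem measurableSet_Ioi] with x (hx : 0 < x)
      exact (hg_cont x hx).tendsto.comp (tendsto_mul_natCeil_div hx.le)
  refine hlim.congr' ?_
  filter_upwards [Ioo_mem_nhdsGT one_pos] with t ht
  refine integral_Ioi_comp_mul_natCeil_div ht.1 g (hb.mono' (hmeas t) ?_)
  filter_upwards [ae_restrict_mem measurableSet_Ioi] with x hx
  exact hstep_dom t ht x hx

section GammaIntegrand

variable {α : ℝ}

lemma integrableOn_exp_neg_mul_rpow_neg (hα : α < 1) :
    IntegrableOn (fun y => exp (-y) * y ^ (-α)) (Ioi 0) := by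
  simpa using GammaIntegral_convergent (s := 1 - α) (by linarith)

lemma integrableOn_exp_neg_mul_rpow_neg_comp_add_one (hα : α < 1) :
    IntegrableOn (fun x => exp (-(x + 1)) * (x + 1) ^ (-α)) (Ioi 0) := by
  have := (integrableOn_exp_neg_mul_rpow_neg hα).mono_set (Ioi_subset_Ioi zero_le_one)
  rw [← (measurePreserving_add_right volume (1 : ℝ)).integrableOn_comp_preimage
    (measurableEmbedding_addRight 1), preimage_add_const_Ioi, sub_self] at this
  exact this

/-- For `α ≥ 0` the left end of the window dominates, for `α < 0` the right end does. -/
lemma exp_neg_mul_rpow_neg_le {x y : ℝ} (hx : 0 < x) (hy : y ∈ Icc x (x + 1)) :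
    exp (-y) * y ^ (-α) ≤ exp (-x) * x ^ (-α) + exp 1 * (exp (-(x + 1)) * (x + 1) ^ (-α)) := by
  obtain ⟨hxy, hyx⟩ := hy
  have hy0 : 0 < y := hx.trans_le hxy
  have hx1 : 0 ≤ exp 1 * (exp (-(x + 1)) * (x + 1) ^ (-α)) := by positivity
  rcases le_or_gt 0 α with hα | hα
  · have : exp (-y) * y ^ (-α) ≤ exp (-x) * x ^ (-α) := by
      gcongr ?_ * ?_
      · exact exp_le_exp.mpr (neg_le_neg hxy)
      · exact rpow_le_rpow_of_nonpos hx hxy (neg_nonpos.mpr hα)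
    linarith
  · have : exp (-y) * y ^ (-α) ≤ exp 1 * exp (-(x + 1)) * (x + 1) ^ (-α) := by
      rw [← exp_add]
      gcongr ?_ * ?_
      · exact exp_le_exp.mpr (by linarith)
      · exact rpow_le_rpow hy0.le hyx (neg_nonneg.mpr hα.le)
    nlinarith [exp_pos (-x), rpow_nonneg hx.le (-α)]

end GammaIntegrand

theorem tendsto_rpow_mul_tsum_exp_neg_mul_rpow_neg {α : ℝ} (hα : α < 1) :
    Tendsto (fun t => t ^ (1 - α) * ∑' k : ℕ, exp (-(t * (k + 1))) * ((k : ℝ) + 1) ^ (-α))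
      (𝓝[>] 0) (𝓝 (Gamma (1 - α))) := by
  have hΓ : Gamma (1 - α) = ∫ y in Ioi 0, exp (-y) * y ^ (-α) := by
    rw [Gamma_eq_integral (by linarith)]
    simp
  have hsum := tendsto_tsum_mul_natCast_nhdsGT_zero (g := fun y => exp (-y) * y ^ (-α))
    (by fun_prop)
    (fun x hx => (continuous_exp.comp continuous_neg).continuousAt.mul
      (continuousAt_rpow_const x (-α) (.inl hx.ne')))
    ((integrableOn_exp_neg_mul_rpow_neg hα).add
      ((integrableOn_exp_neg_mul_rpow_neg_comp_add_one hα).const_mul (exp 1)))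
    fun x hx y hy => by
      rw [norm_of_nonneg (by have := hx.le.trans hy.1; positivity)]
      exact exp_neg_mul_rpow_neg_le hx hy
  rw [← hΓ] at hsum
  refine hsum.congr' ?_
  filter_upwards [self_mem_nhdsWithin] with t (ht : 0 < t)
  rw [← tsum_mul_left]
  refine tsum_congr fun k => ?_
  push_cast
  rw [mul_rpow ht.le (by positivity), rpow_sub ht, rpow_one, rpow_neg ht.le]
  field_simp

lemma tendsto_neg_log_nhdsWithin_one :
    Tendsto (fun z => -log z) (𝓝[Ioo 0 1] 1) (𝓝[>] 0) := by
  refine tendsto_nhdsWithin_iff.mpr ⟨?_, ?_⟩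
  · have : Tendsto (fun z => -log z) (𝓝 1) (𝓝 (-log 1)) := (continuousAt_log one_ne_zero).neg
    simpa using this.mono_left nhdsWithin_le_nhds
  · filter_upwards [self_mem_nhdsWithin] with z hz
    exact neg_pos.mpr (log_neg hz.1 hz.2)

/-- For α < 1, ∑ zᵏ/k^α ~ Γ(1−α) (log(1/z))^{α−1} as z → 1⁻. -/
theorem stmt17 (α : ℝ) (hα : α < 1) :
    Tendsto (fun z : ℝ =>
        (∑' k : ℕ, z ^ (k + 1) / ((k : ℝ) + 1) ^ α) /
          (Real.Gamma (1 - α) * Real.log (1 / z) ^ (α - 1)))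
      (nhdsWithin 1 (Set.Ioo 0 1)) (nhds 1) := by
  have hΓ : Gamma (1 - α) ≠ 0 := (Gamma_pos_of_pos (by linarith)).ne'
  have hlim := ((tendsto_rpow_mul_tsum_exp_neg_mul_rpow_neg hα).comp
    tendsto_neg_log_nhdsWithin_one).div_const (Gamma (1 - α))
  rw [div_self hΓ] at hlim
  refine hlim.congr' ?_
  filter_upwards [self_mem_nhdsWithin] with z ⟨hz0, hz1⟩
  have ht : 0 < -log z := neg_pos.mpr (log_neg hz0 hz1)
  have hsummand (k : ℕ) : exp (-(-log z * (k + 1))) * ((k : ℝ) + 1) ^ (-α)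
      = z ^ (k + 1) / ((k : ℝ) + 1) ^ α := by
    rw [rpow_neg (by positivity), ← div_eq_mul_inv,
      show -(-log z * (k + 1)) = ((k + 1 : ℕ) : ℝ) * log z by push_cast; ring,
      exp_nat_mul, exp_log hz0]
  rw [one_div, log_inv, show α - 1 = -(1 - α) by ring, rpow_neg ht.le, comp_apply,
    tsum_congr hsummand]
  field_simp
end
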